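/- arXiv:2601.17446 — 8 statements merged into one kernel-verified Lean document; each statement's English description precedes it below -/
import Mathlib

section
/- Let A, B, C, D, E be vectors in ℝ³. If [A,B,D]·[A,C,E] = [A,B,E]·[A,C,D] and [A,D,E] ≠ 0 (i.e., A, D, E are not collinear), then [A,B,C] = 0 (i.e., A, B, C are collinear). -/
/-- The bracket `[A,B,C]`: the determinant of the 3×3 matrix whose columns are `A`, `B`, `C`. -/
noncomputable def bracket3 (A B C : Fin 3 → ℝ) : ℝ :=
  ((Matrix.of ![A, B, C]).transpose).det

lemma gp_identity (A B C D E : Fin 3 → ℝ) :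
    bracket3 A B C * bracket3 A D E =
      bracket3 A B D * bracket3 A C E - bracket3 A B E * bracket3 A C D := by
  simp only [bracket3, Matrix.det_transpose, Matrix.det_fin_three, Matrix.of_apply]
  simp [Matrix.cons_val_zero, Matrix.cons_val_one]
  ring

/-- If `[A,B,D]·[A,C,E] = [A,B,E]·[A,C,D]` and `A`, `D`, `E` are not collinear
(`[A,D,E] ≠ 0`), then `A`, `B`, `C` are collinear (`[A,B,C] = 0`). -/
theorem binomial_imp_collinear (A B C D E : Fin 3 → ℝ)
    (h : bracket3 A B D * bracket3 A C E = bracket3 A B E * bracket3 A C D)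
    (hADE : bracket3 A D E ≠ 0) :
    bracket3 A B C = 0 := by
  have := gp_identity A B C D E
  rw [h, sub_self] at this
  exact (mul_eq_zero.mp this).resolve_right hADE
end

section
/- Let P, Q, l, m be vectors in ℝ³ with l × m ≠ 0. Then the three projective points represented by P, Q and l × m are collinear (i.e., det(P, Q, l × m) = 0) if and only if ⟨P,l⟩·⟨Q,m⟩ = ⟨P,m⟩·⟨Q,l⟩. In other words, the quadrangle on the two points P, Q and the two lines l, m is coherent precisely when its multiplicative cross-ratio-type condition ⟨P,l⟩⟨Q,m⟩ = ⟨P,m⟩⟨Q,l⟩ holds. -/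
/-- For two points `P, Q` and two lines `l, m` with `l × m ≠ 0`, the points `P`, `Q`
and the intersection point `l × m` are collinear iff `⟨P,l⟩·⟨Q,m⟩ = ⟨P,m⟩·⟨Q,l⟩`
(coherency of the quadrangle). -/
theorem coherent_quadrangle_iff (P Q l m : Fin 3 → ℝ)
    (hlm : crossProduct l m ≠ 0) :
    bracket3 P Q (crossProduct l m) = 0 ↔
      dotProduct P l * dotProduct Q m
        = dotProduct P m * dotProduct Q l := by
  have h : bracket3 P Q (crossProduct l m)
      = dotProduct P l * dotProduct Q m
        - dotProduct P m * dotProduct Q l := by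
    simp [bracket3, crossProduct, Matrix.det_fin_three, dotProduct,
      Fin.sum_univ_three, Matrix.transpose_apply, Matrix.vecHead, Matrix.vecTail]
    ring
  rw [h, sub_eq_zero]
end

section
/- Let P, Q, L₁, L₂, M₁, M₂, I be vectors in ℝ³ such that the three binomial equations [L₁,L₂,P]·[L₁,I,Q] = [L₁,L₂,Q]·[L₁,I,P], [M₁,M₂,Q]·[M₁,I,P] = [M₁,M₂,P]·[M₁,I,Q], and [I,P,L₁]·[I,Q,M₁] = [I,P,M₁]·[I,Q,L₁] all hold, and such that the four brackets [L₁,I,P], [L₁,I,Q], [M₁,I,P], [M₁,I,Q] are all nonzero. Then [P,L₁,L₂]·[Q,M₁,M₂] = [P,M₁,M₂]·[Q,L₁,L₂]. -/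
lemma bracket3_cyc (A B C : Fin 3 → ℝ) : bracket3 A B C = bracket3 B C A := by
  simp only [bracket3, Matrix.det_transpose, Matrix.det_fin_three, Matrix.of_apply,
    Matrix.cons_val', Matrix.cons_val_zero, Matrix.cons_val_one, Matrix.head_cons,
    Matrix.empty_val', Matrix.cons_val_fin_one, Matrix.head_fin_const, Matrix.cons_val_two,
    Matrix.tail_cons]
  ring

/-- Combining the three binomial equations encoded by a coherent quadrangle
(with suitable nondegeneracy assumptions) yields the single binomial equation
`[P,L₁,L₂]·[Q,M₁,M₂] = [P,M₁,M₂]·[Q,L₁,L₂]`. -/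
theorem quadrangle_binomials (P Q L₁ L₂ M₁ M₂ I : Fin 3 → ℝ)
    (h1 : bracket3 L₁ L₂ P * bracket3 L₁ I Q = bracket3 L₁ L₂ Q * bracket3 L₁ I P)
    (h2 : bracket3 M₁ M₂ Q * bracket3 M₁ I P = bracket3 M₁ M₂ P * bracket3 M₁ I Q)
    (h3 : bracket3 I P L₁ * bracket3 I Q M₁ = bracket3 I P M₁ * bracket3 I Q L₁)
    (hLP : bracket3 L₁ I P ≠ 0) (hLQ : bracket3 L₁ I Q ≠ 0)
    (hMP : bracket3 M₁ I P ≠ 0) (hMQ : bracket3 M₁ I Q ≠ 0) :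
    bracket3 P L₁ L₂ * bracket3 Q M₁ M₂ = bracket3 P M₁ M₂ * bracket3 Q L₁ L₂ := by
  have h3' : bracket3 L₁ I P * bracket3 M₁ I Q
      = bracket3 M₁ I P * bracket3 L₁ I Q := by
    rw [bracket3_cyc L₁ I P, bracket3_cyc M₁ I Q, bracket3_cyc M₁ I P,
      bracket3_cyc L₁ I Q]
    exact h3
  rw [bracket3_cyc P L₁ L₂, bracket3_cyc Q M₁ M₂, bracket3_cyc P M₁ M₂,
    bracket3_cyc Q L₁ L₂]
  apply mul_right_cancel₀ (mul_ne_zero hMP hLQ)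
  calc bracket3 L₁ L₂ P * bracket3 M₁ M₂ Q * (bracket3 M₁ I P * bracket3 L₁ I Q)
      = (bracket3 L₁ L₂ P * bracket3 L₁ I Q) * (bracket3 M₁ M₂ Q * bracket3 M₁ I P) := by
        ring
    _ = (bracket3 L₁ L₂ Q * bracket3 L₁ I P) * (bracket3 M₁ M₂ P * bracket3 M₁ I Q) := by
        rw [h1, h2]
    _ = bracket3 M₁ M₂ P * bracket3 L₁ L₂ Q * (bracket3 L₁ I P * bracket3 M₁ I Q) := by
        ring
    _ = bracket3 M₁ M₂ P * bracket3 L₁ L₂ Q * (bracket3 M₁ I P * bracket3 L₁ I Q) := by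
        rw [h3']
end

section
/- (3D Menelaus.) Let p₁, p₂, p₃, p₄ be four points of ℝ³ that are not coplanar (affinely independent), let n ∈ ℝ³ be nonzero and c ∈ ℝ, and suppose ⟨n, pᵢ⟩ ≠ c for i = 1,…,4 (the plane H = {x : ⟨n,x⟩ = c} is in general position). For each i (indices mod 4) let qᵢ = pᵢ + tᵢ·(p_{i+1} − pᵢ) be a point of the line through pᵢ and p_{i+1} lying on H, i.e., ⟨n, qᵢ⟩ = c. Then each tᵢ ∉ {0,1} and the product of the four oriented ratios equals 1: ∏_{i=1}^{4} tᵢ/(1−tᵢ) = 1, i.e., (p₁q₁/q₁p₂)·(p₂q₂/q₂p₃)·(p₃q₃/q₃p₄)·(p₄q₄/q₄p₁) = 1. -/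
/-- **3D Menelaus.** Let `p₁,…,p₄` be four non-coplanar points of `ℝ³` and let
`H = {x : ⟨n,x⟩ = c}` be a plane containing none of them. If `qᵢ = pᵢ + tᵢ·(p_{i+1} − pᵢ)`
lies on `H` for each `i` (indices mod 4), then each `tᵢ ∉ {0,1}` and
`∏ᵢ tᵢ/(1−tᵢ) = 1`. -/
theorem menelaus_3d (p q : Fin 4 → (Fin 3 → ℝ)) (t : Fin 4 → ℝ)
    (n : Fin 3 → ℝ) (c : ℝ)
    (hp : AffineIndependent ℝ p)
    (hn : n ≠ 0)
    (hgen : ∀ i, dotProduct n (p i) ≠ c)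
    (hq : ∀ i, q i = p i + t i • (p (i + 1) - p i))
    (hqH : ∀ i, dotProduct n (q i) = c) :
    (∀ i, t i ≠ 0 ∧ t i ≠ 1) ∧ (∏ i, t i / (1 - t i)) = 1 := by
  obtain ⟨a, ha⟩ : ∃ a : Fin 4 → ℝ, ∀ i, a i = dotProduct n (p i) - c :=
    ⟨_, fun i => rfl⟩
  have ha0 : ∀ i, a i ≠ 0 := fun i => (ha i) ▸ sub_ne_zero.mpr (hgen i)
  have key : ∀ i, a i + t i * (a (i + 1) - a i) = 0 := by
    intro i
    have h := hqH i
    rw [hq i] at h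
    simp only [dotProduct_add, dotProduct_smul, dotProduct_sub,
      smul_eq_mul] at h
    rw [ha i, ha (i + 1)]
    linarith [h]
  have ht0 : ∀ i, t i ≠ 0 := by
    intro i h
    have hk := key i
    rw [h] at hk
    simp at hk
    exact ha0 i hk
  have ht1 : ∀ i, t i ≠ 1 := by
    intro i h
    have hk := key i
    rw [h] at hk
    exact ha0 (i + 1) (by linarith)
  refine ⟨fun i => ⟨ht0 i, ht1 i⟩, ?_⟩
  have ht : ∀ i, t i / (1 - t i) = -a i / a (i + 1) := by
    intro i
    have h := key i
    have h1 : 1 - t i ≠ 0 := sub_ne_zero.mpr (Ne.symm (ht1 i))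
    rw [div_eq_div_iff h1 (ha0 (i + 1))]
    linear_combination h
  rw [Fin.prod_univ_four, ht 0, ht 1, ht 2, ht 3]
  have e0 : (0 : Fin 4) + 1 = 1 := rfl
  have e1 : (1 : Fin 4) + 1 = 2 := rfl
  have e2 : (2 : Fin 4) + 1 = 3 := rfl
  have e3 : (3 : Fin 4) + 1 = 0 := rfl
  rw [e0, e1, e2, e3, div_mul_div_comm, div_mul_div_comm, div_mul_div_comm,
    div_eq_one_iff_eq (by simp [ha0, mul_ne_zero, (ha0 1), (ha0 2), (ha0 3), (ha0 0)] :
      a 1 * a 2 * a 3 * a 0 ≠ 0)]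
  ring
end

section
/- (3D Ceva.) Let p₁, p₂, p₃, p₄ be four affinely independent points of ℝ³ and let a be a further point not lying on any of the four planes spanned by three of the points p₁,…,p₄. For each i (indices mod 4) let Hᵢ be the plane spanned by a, p_{i+2}, p_{i+3}, and let qᵢ = pᵢ + tᵢ·(p_{i+1} − pᵢ) be the intersection point of Hᵢ with the line through pᵢ and p_{i+1}, i.e., qᵢ lies in the affine span of {a, p_{i+2}, p_{i+3}}. Then each tᵢ ∉ {0,1} and ∏_{i=1}^{4} tᵢ/(1−tᵢ) = 1, i.e., (p₁q₁/q₁p₂)·(p₂q₂/q₂p₃)·(p₃q₃/q₃p₄)·(p₄q₄/q₄p₁) = 1. -/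
/-- **3D Ceva.** Let `p₁,…,p₄` be four affinely independent points of `ℝ³` and `a` a
further point lying on none of the four face planes. If `qᵢ = pᵢ + tᵢ·(p_{i+1} − pᵢ)`
lies on the plane spanned by `a`, `p_{i+2}`, `p_{i+3}` for each `i` (indices mod 4),
then each `tᵢ ∉ {0,1}` and `∏ᵢ tᵢ/(1−tᵢ) = 1`. -/
theorem ceva_3d (p q : Fin 4 → (Fin 3 → ℝ)) (t : Fin 4 → ℝ) (a : Fin 3 → ℝ)
    (hp : AffineIndependent ℝ p)
    (ha : ∀ i : Fin 4,
      a ∉ affineSpan ℝ ({p (i + 1), p (i + 2), p (i + 3)} : Set (Fin 3 → ℝ)))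
    (hq : ∀ i, q i = p i + t i • (p (i + 1) - p i))
    (hqH : ∀ i, q i ∈ affineSpan ℝ ({a, p (i + 2), p (i + 3)} : Set (Fin 3 → ℝ))) :
    (∀ i, t i ≠ 0 ∧ t i ≠ 1) ∧ (∏ i, t i / (1 - t i)) = 1 := by
  have hspan : affineSpan ℝ (Set.range p) = ⊤ := by
    rw [hp.affineSpan_eq_top_iff_card_eq_finrank_add_one]
    simp
  let b : AffineBasis (Fin 4) ℝ (Fin 3 → ℝ) := ⟨p, hp, hspan⟩
  have hbp : ∀ j, b j = p j := fun j => rfl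
  set c : Fin 4 → ℝ := fun j => b.coord j a with hc
  have hcoordp : ∀ j k : Fin 4, b.coord j (p k) = if j = k then 1 else 0 := by
    intro j k
    rw [← hbp k, b.coord_apply]
  have habary : a = ∑ j : Fin 4, c j • p j := by
    have := b.linear_combination_coord_eq_self a
    simp only [hbp] at this
    exact this.symm
  have hcsum : ∑ j : Fin 4, c j = 1 := b.sum_coord_apply_eq_one a
  -- each barycentric coordinate of a is nonzero
  have hca : ∀ i, c i ≠ 0 := by
    intro i hci
    apply ha i
    have hre : (∑ j : Fin 4, c j • p j) = ∑ k : Fin 4, c (i + k) • p (i + k) :=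
      (Fintype.sum_equiv (Equiv.addLeft i) _ _ (fun k => rfl)).symm
    have h4 : ∀ f : Fin 4 → (Fin 3 → ℝ), (∑ k : Fin 4, f k)
        = f 0 + f 1 + f 2 + f 3 := fun f => Fin.sum_univ_four f
    have hre' : a = c (i+1) • p (i+1) + c (i+2) • p (i+2) + c (i+3) • p (i+3) := by
      rw [habary, hre, h4]
      simp [hci]
    have hwsum : c (i+1) + c (i+2) + c (i+3) = 1 := by
      have : (∑ j : Fin 4, c j) = ∑ k : Fin 4, c (i + k) :=
        (Fintype.sum_equiv (Equiv.addLeft i) _ _ (fun k => rfl)).symm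
      rw [this, Fin.sum_univ_four] at hcsum
      simpa [hci] using hcsum
    have hset : ({p (i+1), p (i+2), p (i+3)} : Set (Fin 3 → ℝ))
        = Set.range ![p (i+1), p (i+2), p (i+3)] := by
      ext x; simp [Matrix.range_cons, Matrix.range_empty]; tauto
    rw [hset]
    have hsum3 : ∑ k : Fin 3, (![c (i+1), c (i+2), c (i+3)]) k = 1 := by
      rw [Fin.sum_univ_three]; simpa using hwsum
    have := affineCombination_mem_affineSpan (k := ℝ) hsum3
      ![p (i+1), p (i+2), p (i+3)]
    convert this using 1
    rw [Finset.univ.affineCombination_eq_linear_combination _ _ hsum3,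
      Fin.sum_univ_three]
    simpa using hre'
  -- coordinates of q i
  have hcoordq : ∀ j i : Fin 4, b.coord j (q i)
      = (1 - t i) * b.coord j (p i) + t i * b.coord j (p (i+1)) := by
    intro j i
    have hql : q i = AffineMap.lineMap (p i) (p (i+1)) (t i) := by
      rw [hq, AffineMap.lineMap_apply]
      simp only [vsub_eq_sub, vadd_eq_add]
      abel
    rw [hql, AffineMap.apply_lineMap, AffineMap.lineMap_apply]
    simp only [vsub_eq_sub, vadd_eq_add, smul_eq_mul]
    ring
  -- key relation for each i
  have key : ∀ i : Fin 4, (t i ≠ 0 ∧ t i ≠ 1) ∧ t i * c i = (1 - t i) * c (i+1) := by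
    intro i
    have hset : ({a, p (i+2), p (i+3)} : Set (Fin 3 → ℝ))
        = Set.range ![a, p (i+2), p (i+3)] := by
      ext x; simp [Matrix.range_cons, Matrix.range_empty]; tauto
    have hmem := hqH i
    rw [hset] at hmem
    obtain ⟨w, hw, hqw⟩ := eq_affineCombination_of_mem_affineSpan_of_fintype hmem
    have hcoord : ∀ j : Fin 4, b.coord j (q i)
        = w 0 * c j + w 1 * b.coord j (p (i+2)) + w 2 * b.coord j (p (i+3)) := by
      intro j
      rw [hqw, Finset.map_affineCombination _ _ _ hw,
        Finset.univ.affineCombination_eq_linear_combination _ _ hw, Fin.sum_univ_three]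
      simp [mul_comm]
      exact Or.inl rfl
    have hne1 : i + 1 ≠ i := by simp [Fin.ext_iff, Fin.add_def]; omega
    have hne2 : i ≠ i + 2 := by simp [Fin.ext_iff, Fin.add_def]; omega
    have hne3 : i ≠ i + 3 := by simp [Fin.ext_iff, Fin.add_def]; omega
    have hne4 : i + 1 ≠ i + 2 := by simp [Fin.ext_iff, Fin.add_def]; omega
    have hne5 : i + 1 ≠ i + 3 := by simp [Fin.ext_iff, Fin.add_def]; omega
    have e1 : 1 - t i = w 0 * c i := by
      have h := hcoord i
      rw [hcoordq i i] at h
      rw [hcoordp, hcoordp, hcoordp, hcoordp] at h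
      simp [hne2, hne3, hne1, hne1.symm] at h
      linarith [h]
    have e2 : t i = w 0 * c (i+1) := by
      have h := hcoord (i+1)
      rw [hcoordq (i+1) i] at h
      rw [hcoordp, hcoordp, hcoordp, hcoordp] at h
      simp [hne1, hne4, hne5] at h
      linarith [h]
    have hw0 : w 0 ≠ 0 := by
      intro h0
      rw [h0, zero_mul] at e1 e2
      linarith
    refine ⟨⟨?_, ?_⟩, ?_⟩
    · rw [e2]; exact mul_ne_zero hw0 (hca _)
    · intro h1
      rw [h1] at e1
      exact (mul_ne_zero hw0 (hca i)) (by linarith)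
    · rw [e1, e2]; ring
  refine ⟨fun i => (key i).1, ?_⟩
  have hfac : ∀ i : Fin 4, t i / (1 - t i) = c (i+1) / c i := by
    intro i
    have h1 : (1 : ℝ) - t i ≠ 0 := sub_ne_zero.mpr (Ne.symm (key i).1.2)
    rw [div_eq_div_iff h1 (hca i)]
    have := (key i).2
    linarith [this]
  calc (∏ i, t i / (1 - t i)) = ∏ i, c (i+1) / c i := by
        exact Finset.prod_congr rfl (fun i _ => hfac i)
    _ = (∏ i, c (i+1)) / (∏ i, c i) := Finset.prod_div_distrib _ _
    _ = 1 := by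
        rw [Fintype.prod_equiv (Equiv.addRight (1 : Fin 4)) (fun i => c (i + 1)) c
          (fun i => rfl)]
        exact div_self (Finset.prod_ne_zero_iff.mpr (fun i _ => hca i))
end

section
/- (Sixteen Point Theorem, bracket form.) Let p₁,…,p₈ be vectors in ℝ⁴ regarded as homogeneous coordinates of points of real projective 3-space, and let Q denote the family of eight index quadruples {1,5,2,6}, {2,6,3,7}, {3,4,5,6}, {1,4,6,7}, {3,4,7,8}, {1,4,5,8}, {1,2,7,8}, {2,3,5,8}. Assume that for every 4-element subset S of {1,…,8} that does NOT belong to Q, the bracket of the corresponding four vectors is nonzero. If the brackets of the first seven quadruples of Q vanish, i.e., [p₁,p₅,p₂,p₆] = [p₂,p₆,p₃,p₇] = [p₃,p₄,p₅,p₆] = [p₁,p₄,p₆,p₇] = [p₃,p₄,p₇,p₈] = [p₁,p₄,p₅,p₈] = [p₁,p₂,p₇,p₈] = 0, then also [p₂,p₃,p₅,p₈] = 0. -/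
/-- The bracket `[a,b,c,d]`: the determinant of the 4×4 matrix whose columns are
`a`, `b`, `c`, `d`. -/
noncomputable def bracket4 (a b c d : Fin 4 → ℝ) : ℝ :=
  ((Matrix.of ![a, b, c, d]).transpose).det

/-- The eight coplanarity quadruples of the Sixteen Point Theorem:
`{1,5,2,6}, {2,6,3,7}, {3,4,5,6}, {1,4,6,7}, {3,4,7,8}, {1,4,5,8}, {1,2,7,8}, {2,3,5,8}`
(written here with 0-based indices, so point `i` of the statement is `p (i-1)`). -/
def sixteenPointQuadruples : Finset (Finset (Fin 8)) :=
  { {0, 4, 1, 5}, {1, 5, 2, 6}, {2, 3, 4, 5}, {0, 3, 5, 6},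
    {2, 3, 6, 7}, {0, 3, 4, 7}, {0, 1, 6, 7}, {1, 2, 4, 7} }


lemma bexp (a b c d : Fin 4 → ℝ) : bracket4 a b c d = a 0*b 1*c 2*d 3-a 0*b 1*c 3*d 2-a 0*b 2*c 1*d 3+a 0*b 2*c 3*d 1+a 0*b 3*c 1*d 2-a 0*b 3*c 2*d 1-a 1*b 0*c 2*d 3+a 1*b 0*c 3*d 2+a 1*b 2*c 0*d 3-a 1*b 2*c 3*d 0-a 1*b 3*c 0*d 2+a 1*b 3*c 2*d 0+a 2*b 0*c 1*d 3-a 2*b 0*c 3*d 1-a 2*b 1*c 0*d 3+a 2*b 1*c 3*d 0+a 2*b 3*c 0*d 1-a 2*b 3*c 1*d 0-a 3*b 0*c 1*d 2+a 3*b 0*c 2*d 1+a 3*b 1*c 0*d 2-a 3*b 1*c 2*d 0-a 3*b 2*c 0*d 1+a 3*b 2*c 1*d 0 := by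
  rw [bracket4, Matrix.det_transpose]
  simp [Matrix.det_succ_row_zero, Fin.sum_univ_succ, Fin.succAbove,
    show (Fin.succ 2 : Fin 4) = 3 from rfl, show Fin.castSucc (2 : Fin 3) = (2 : Fin 4) from rfl,
    Matrix.det_fin_three]
  ring


set_option maxHeartbeats 1000000 in
/-- **Sixteen Point Theorem** (bracket form).  If all brackets of quadruples outside
the distinguished family are nonzero and the first seven distinguished brackets
vanish, then the eighth vanishes as well. -/
theorem sixteen_point_theorem (p : Fin 8 → (Fin 4 → ℝ))
    (hnd : ∀ i j k l : Fin 8, ({i, j, k, l} : Finset (Fin 8)).card = 4 →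
      ({i, j, k, l} : Finset (Fin 8)) ∉ sixteenPointQuadruples →
      bracket4 (p i) (p j) (p k) (p l) ≠ 0)
    (h1 : bracket4 (p 0) (p 4) (p 1) (p 5) = 0)
    (h2 : bracket4 (p 1) (p 5) (p 2) (p 6) = 0)
    (h3 : bracket4 (p 2) (p 3) (p 4) (p 5) = 0)
    (h4 : bracket4 (p 0) (p 3) (p 5) (p 6) = 0)
    (h5 : bracket4 (p 2) (p 3) (p 6) (p 7) = 0)
    (h6 : bracket4 (p 0) (p 3) (p 4) (p 7) = 0)
    (h7 : bracket4 (p 0) (p 1) (p 6) (p 7) = 0) :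
    bracket4 (p 1) (p 2) (p 4) (p 7) = 0 := by
  have e1 : (bracket4 (p 0) (p 1) (p 2) (p 4) * bracket4 (p 0) (p 1) (p 3) (p 5)) = (bracket4 (p 0) (p 1) (p 3) (p 4) * bracket4 (p 0) (p 1) (p 2) (p 5)) := by
    simp only [bexp] at h1 ⊢
    linear_combination (-p 0 0*p 1 1*p 2 2*p 3 3+p 0 0*p 1 1*p 2 3*p 3 2+p 0 0*p 1 2*p 2 1*p 3 3-p 0 0*p 1 2*p 2 3*p 3 1-p 0 0*p 1 3*p 2 1*p 3 2+p 0 0*p 1 3*p 2 2*p 3 1+p 0 1*p 1 0*p 2 2*p 3 3-p 0 1*p 1 0*p 2 3*p 3 2-p 0 1*p 1 2*p 2 0*p 3 3+p 0 1*p 1 2*p 2 3*p 3 0+p 0 1*p 1 3*p 2 0*p 3 2-p 0 1*p 1 3*p 2 2*p 3 0-p 0 2*p 1 0*p 2 1*p 3 3+p 0 2*p 1 0*p 2 3*p 3 1+p 0 2*p 1 1*p 2 0*p 3 3-p 0 2*p 1 1*p 2 3*p 3 0-p 0 2*p 1 3*p 2 0*p 3 1+p 0 2*p 1 3*p 2 1*p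 3 0+p 0 3*p 1 0*p 2 1*p 3 2-p 0 3*p 1 0*p 2 2*p 3 1-p 0 3*p 1 1*p 2 0*p 3 2+p 0 3*p 1 1*p 2 2*p 3 0+p 0 3*p 1 2*p 2 0*p 3 1-p 0 3*p 1 2*p 2 1*p 3 0) * h1
  have e2 : (bracket4 (p 0) (p 1) (p 2) (p 5) * bracket4 (p 1) (p 2) (p 3) (p 6)) = (bracket4 (p 1) (p 2) (p 3) (p 5) * bracket4 (p 0) (p 1) (p 2) (p 6)) := by
    simp only [bexp] at h2 ⊢
    linear_combination (-p 0 0*p 1 1*p 2 2*p 3 3+p 0 0*p 1 1*p 2 3*p 3 2+p 0 0*p 1 2*p 2 1*p 3 3-p 0 0*p 1 2*p 2 3*p 3 1-p 0 0*p 1 3*p 2 1*p 3 2+p 0 0*p 1 3*p 2 2*p 3 1+p 0 1*p 1 0*p 2 2*p 3 3-p 0 1*p 1 0*p 2 3*p 3 2-p 0 1*p 1 2*p 2 0*p 3 3+p 0 1*p 1 2*p 2 3*p 3 0+p 0 1*p 1 3*p 2 0*p 3 2-p 0 1*p 1 3*p 2 2*p 3 0-p 0 2*p 1 0*p 2 1*p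 3 3+p 0 2*p 1 0*p 2 3*p 3 1+p 0 2*p 1 1*p 2 0*p 3 3-p 0 2*p 1 1*p 2 3*p 3 0-p 0 2*p 1 3*p 2 0*p 3 1+p 0 2*p 1 3*p 2 1*p 3 0+p 0 3*p 1 0*p 2 1*p 3 2-p 0 3*p 1 0*p 2 2*p 3 1-p 0 3*p 1 1*p 2 0*p 3 2+p 0 3*p 1 1*p 2 2*p 3 0+p 0 3*p 1 2*p 2 0*p 3 1-p 0 3*p 1 2*p 2 1*p 3 0) * h2
  have e3 : (bracket4 (p 0) (p 2) (p 3) (p 4) * bracket4 (p 1) (p 2) (p 3) (p 5)) = (bracket4 (p 1) (p 2) (p 3) (p 4) * bracket4 (p 0) (p 2) (p 3) (p 5)) := by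
    simp only [bexp] at h3 ⊢
    linear_combination (p 0 0*p 1 1*p 2 2*p 3 3-p 0 0*p 1 1*p 2 3*p 3 2-p 0 0*p 1 2*p 2 1*p 3 3+p 0 0*p 1 2*p 2 3*p 3 1+p 0 0*p 1 3*p 2 1*p 3 2-p 0 0*p 1 3*p 2 2*p 3 1-p 0 1*p 1 0*p 2 2*p 3 3+p 0 1*p 1 0*p 2 3*p 3 2+p 0 1*p 1 2*p 2 0*p 3 3-p 0 1*p 1 2*p 2 3*p 3 0-p 0 1*p 1 3*p 2 0*p 3 2+p 0 1*p 1 3*p 2 2*p 3 0+p 0 2*p 1 0*p 2 1*p 3 3-p 0 2*p 1 0*p 2 3*p 3 1-p 0 2*p 1 1*p 2 0*p 3 3+p 0 2*p 1 1*p 2 3*p 3 0+p 0 2*p 1 3*p 2 0*p 3 1-p 0 2*p 1 3*p 2 1*p 3 0-p 0 3*p 1 0*p 2 1*p 3 2+p 0 3*p 1 0*p 2 2*p 3 1+p 0 3*p 1 1*p 2 0*p 3 2-p 0 3*p 1 1*p 2 2*p 3 0-p 0 3*p 1 2*p 2 0*p 3 1+p 0 3*p 1 2*p 2 1*p 3 0)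 * h3
  have e4 : (bracket4 (p 0) (p 1) (p 3) (p 5) * bracket4 (p 0) (p 2) (p 3) (p 6)) = (bracket4 (p 0) (p 2) (p 3) (p 5) * bracket4 (p 0) (p 1) (p 3) (p 6)) := by
    simp only [bexp] at h4 ⊢
    linear_combination (p 0 0*p 1 1*p 2 2*p 3 3-p 0 0*p 1 1*p 2 3*p 3 2-p 0 0*p 1 2*p 2 1*p 3 3+p 0 0*p 1 2*p 2 3*p 3 1+p 0 0*p 1 3*p 2 1*p 3 2-p 0 0*p 1 3*p 2 2*p 3 1-p 0 1*p 1 0*p 2 2*p 3 3+p 0 1*p 1 0*p 2 3*p 3 2+p 0 1*p 1 2*p 2 0*p 3 3-p 0 1*p 1 2*p 2 3*p 3 0-p 0 1*p 1 3*p 2 0*p 3 2+p 0 1*p 1 3*p 2 2*p 3 0+p 0 2*p 1 0*p 2 1*p 3 3-p 0 2*p 1 0*p 2 3*p 3 1-p 0 2*p 1 1*p 2 0*p 3 3+p 0 2*p 1 1*p 2 3*p 3 0+p 0 2*p 1 3*p 2 0*p 3 1-p 0 2*p 1 3*p 2 1*p 3 0-p 0 3*p 1 0*p 2 1*p 3 2+p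 0 3*p 1 0*p 2 2*p 3 1+p 0 3*p 1 1*p 2 0*p 3 2-p 0 3*p 1 1*p 2 2*p 3 0-p 0 3*p 1 2*p 2 0*p 3 1+p 0 3*p 1 2*p 2 1*p 3 0) * h4
  have e5 : (bracket4 (p 0) (p 2) (p 3) (p 6) * bracket4 (p 1) (p 2) (p 3) (p 7)) = (bracket4 (p 1) (p 2) (p 3) (p 6) * bracket4 (p 0) (p 2) (p 3) (p 7)) := by
    simp only [bexp] at h5 ⊢
    linear_combination (p 0 0*p 1 1*p 2 2*p 3 3-p 0 0*p 1 1*p 2 3*p 3 2-p 0 0*p 1 2*p 2 1*p 3 3+p 0 0*p 1 2*p 2 3*p 3 1+p 0 0*p 1 3*p 2 1*p 3 2-p 0 0*p 1 3*p 2 2*p 3 1-p 0 1*p 1 0*p 2 2*p 3 3+p 0 1*p 1 0*p 2 3*p 3 2+p 0 1*p 1 2*p 2 0*p 3 3-p 0 1*p 1 2*p 2 3*p 3 0-p 0 1*p 1 3*p 2 0*p 3 2+p 0 1*p 1 3*p 2 2*p 3 0+p 0 2*p 1 0*p 2 1*p 3 3-p 0 2*p 1 0*p 2 3*p 3 1-p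 0 2*p 1 1*p 2 0*p 3 3+p 0 2*p 1 1*p 2 3*p 3 0+p 0 2*p 1 3*p 2 0*p 3 1-p 0 2*p 1 3*p 2 1*p 3 0-p 0 3*p 1 0*p 2 1*p 3 2+p 0 3*p 1 0*p 2 2*p 3 1+p 0 3*p 1 1*p 2 0*p 3 2-p 0 3*p 1 1*p 2 2*p 3 0-p 0 3*p 1 2*p 2 0*p 3 1+p 0 3*p 1 2*p 2 1*p 3 0) * h5
  have e6 : (bracket4 (p 0) (p 1) (p 3) (p 4) * bracket4 (p 0) (p 2) (p 3) (p 7)) = (bracket4 (p 0) (p 2) (p 3) (p 4) * bracket4 (p 0) (p 1) (p 3) (p 7)) := by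
    simp only [bexp] at h6 ⊢
    linear_combination (p 0 0*p 1 1*p 2 2*p 3 3-p 0 0*p 1 1*p 2 3*p 3 2-p 0 0*p 1 2*p 2 1*p 3 3+p 0 0*p 1 2*p 2 3*p 3 1+p 0 0*p 1 3*p 2 1*p 3 2-p 0 0*p 1 3*p 2 2*p 3 1-p 0 1*p 1 0*p 2 2*p 3 3+p 0 1*p 1 0*p 2 3*p 3 2+p 0 1*p 1 2*p 2 0*p 3 3-p 0 1*p 1 2*p 2 3*p 3 0-p 0 1*p 1 3*p 2 0*p 3 2+p 0 1*p 1 3*p 2 2*p 3 0+p 0 2*p 1 0*p 2 1*p 3 3-p 0 2*p 1 0*p 2 3*p 3 1-p 0 2*p 1 1*p 2 0*p 3 3+p 0 2*p 1 1*p 2 3*p 3 0+p 0 2*p 1 3*p 2 0*p 3 1-p 0 2*p 1 3*p 2 1*p 3 0-p 0 3*p 1 0*p 2 1*p 3 2+p 0 3*p 1 0*p 2 2*p 3 1+p 0 3*p 1 1*p 2 0*p 3 2-p 0 3*p 1 1*p 2 2*p 3 0-p 0 3*p 1 2*p 2 0*p 3 1+p 0 3*p 1 2*p 2 1*p 3 0)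 * h6
  have e7 : (bracket4 (p 0) (p 1) (p 2) (p 6) * bracket4 (p 0) (p 1) (p 3) (p 7)) = (bracket4 (p 0) (p 1) (p 3) (p 6) * bracket4 (p 0) (p 1) (p 2) (p 7)) := by
    simp only [bexp] at h7 ⊢
    linear_combination (p 0 0*p 1 1*p 2 2*p 3 3-p 0 0*p 1 1*p 2 3*p 3 2-p 0 0*p 1 2*p 2 1*p 3 3+p 0 0*p 1 2*p 2 3*p 3 1+p 0 0*p 1 3*p 2 1*p 3 2-p 0 0*p 1 3*p 2 2*p 3 1-p 0 1*p 1 0*p 2 2*p 3 3+p 0 1*p 1 0*p 2 3*p 3 2+p 0 1*p 1 2*p 2 0*p 3 3-p 0 1*p 1 2*p 2 3*p 3 0-p 0 1*p 1 3*p 2 0*p 3 2+p 0 1*p 1 3*p 2 2*p 3 0+p 0 2*p 1 0*p 2 1*p 3 3-p 0 2*p 1 0*p 2 3*p 3 1-p 0 2*p 1 1*p 2 0*p 3 3+p 0 2*p 1 1*p 2 3*p 3 0+p 0 2*p 1 3*p 2 0*p 3 1-p 0 2*p 1 3*p 2 1*p 3 0-p 0 3*p 1 0*p 2 1*p 3 2+p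 0 3*p 1 0*p 2 2*p 3 1+p 0 3*p 1 1*p 2 0*p 3 2-p 0 3*p 1 1*p 2 2*p 3 0-p 0 3*p 1 2*p 2 0*p 3 1+p 0 3*p 1 2*p 2 1*p 3 0) * h7
  have hW : bracket4 (p 0) (p 1) (p 2) (p 3) ≠ 0 := hnd 0 1 2 3 (by decide) (by decide)
  have n0 : bracket4 (p 0) (p 1) (p 2) (p 5) ≠ 0 := hnd 0 1 2 5 (by decide) (by decide)
  have n1 : bracket4 (p 0) (p 1) (p 2) (p 6) ≠ 0 := hnd 0 1 2 6 (by decide) (by decide)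
  have n2 : bracket4 (p 0) (p 1) (p 2) (p 7) ≠ 0 := hnd 0 1 2 7 (by decide) (by decide)
  have n3 : bracket4 (p 0) (p 1) (p 3) (p 4) ≠ 0 := hnd 0 1 3 4 (by decide) (by decide)
  have n4 : bracket4 (p 0) (p 1) (p 3) (p 5) ≠ 0 := hnd 0 1 3 5 (by decide) (by decide)
  have n5 : bracket4 (p 0) (p 1) (p 3) (p 6) ≠ 0 := hnd 0 1 3 6 (by decide) (by decide)
  have n6 : bracket4 (p 0) (p 1) (p 3) (p 7) ≠ 0 := hnd 0 1 3 7 (by decide) (by decide)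
  have n7 : bracket4 (p 0) (p 2) (p 3) (p 4) ≠ 0 := hnd 0 2 3 4 (by decide) (by decide)
  have n8 : bracket4 (p 0) (p 2) (p 3) (p 5) ≠ 0 := hnd 0 2 3 5 (by decide) (by decide)
  have n9 : bracket4 (p 0) (p 2) (p 3) (p 6) ≠ 0 := hnd 0 2 3 6 (by decide) (by decide)
  have n10 : bracket4 (p 0) (p 2) (p 3) (p 7) ≠ 0 := hnd 0 2 3 7 (by decide) (by decide)
  have n11 : bracket4 (p 1) (p 2) (p 3) (p 4) ≠ 0 := hnd 1 2 3 4 (by decide) (by decide)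
  have n12 : bracket4 (p 1) (p 2) (p 3) (p 5) ≠ 0 := hnd 1 2 3 5 (by decide) (by decide)
  have n13 : bracket4 (p 1) (p 2) (p 3) (p 6) ≠ 0 := hnd 1 2 3 6 (by decide) (by decide)
  have key2 : ((bracket4 (p 0) (p 1) (p 2) (p 4) * bracket4 (p 1) (p 2) (p 3) (p 7)) - (bracket4 (p 1) (p 2) (p 3) (p 4) * bracket4 (p 0) (p 1) (p 2) (p 7))) * (bracket4 (p 0) (p 1) (p 2) (p 5)*bracket4 (p 0) (p 1) (p 2) (p 6)*bracket4 (p 0) (p 1) (p 2) (p 7)*bracket4 (p 0) (p 1) (p 3) (p 4)*bracket4 (p 0) (p 1) (p 3) (p 5)*bracket4 (p 0) (p 1) (p 3) (p 6)*bracket4 (p 0) (p 1) (p 3) (p 7)*bracket4 (p 0) (p 2) (p 3) (p 4)*bracket4 (p 0) (p 2) (p 3) (p 5)*bracket4 (p 0) (p 2) (p 3) (p 6)*bracket4 (p 0) (p 2) (p 3) (p 7)*bracket4 (p 1) (p 2) (p 3) (p 4)*bracket4 (p 1) (p 2) (p 3) (p 5)*bracket4 (p 1) (p 2) (p 3) (p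 6)) = 0 := by
    linear_combination (bracket4 (p 0) (p 1) (p 2) (p 6)*bracket4 (p 0) (p 1) (p 2) (p 7)*bracket4 (p 0) (p 1) (p 2) (p 7)*bracket4 (p 0) (p 1) (p 3) (p 5)*bracket4 (p 0) (p 1) (p 3) (p 6)*bracket4 (p 0) (p 1) (p 3) (p 7)*bracket4 (p 0) (p 2) (p 3) (p 4)*bracket4 (p 0) (p 2) (p 3) (p 5)*bracket4 (p 0) (p 2) (p 3) (p 6)*bracket4 (p 0) (p 2) (p 3) (p 7)*bracket4 (p 1) (p 2) (p 3) (p 4)*bracket4 (p 1) (p 2) (p 3) (p 4)*bracket4 (p 1) (p 2) (p 3) (p 5)*bracket4 (p 1) (p 2) (p 3) (p 6)) * e1 + (bracket4 (p 0) (p 1) (p 2) (p 4)*bracket4 (p 0) (p 1) (p 2) (p 7)*bracket4 (p 0) (p 1) (p 2) (p 7)*bracket4 (p 0) (p 1) (p 3) (p 5)*bracket4 (p 0) (p 1) (p 3) (p 5)*bracket4 (p 0) (p 1) (p 3) (p 6)*bracket4 (p 0) (p 1) (p 3) (p 7)*bracket4 (p 0) (p 2) (p 3) (p 4)*bracket4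 (p 0) (p 2) (p 3) (p 5)*bracket4 (p 0) (p 2) (p 3) (p 6)*bracket4 (p 0) (p 2) (p 3) (p 7)*bracket4 (p 1) (p 2) (p 3) (p 4)*bracket4 (p 1) (p 2) (p 3) (p 4)*bracket4 (p 1) (p 2) (p 3) (p 6)) * e2 + (bracket4 (p 0) (p 1) (p 2) (p 4)*bracket4 (p 0) (p 1) (p 2) (p 5)*bracket4 (p 0) (p 1) (p 2) (p 7)*bracket4 (p 0) (p 1) (p 2) (p 7)*bracket4 (p 0) (p 1) (p 3) (p 5)*bracket4 (p 0) (p 1) (p 3) (p 5)*bracket4 (p 0) (p 1) (p 3) (p 6)*bracket4 (p 0) (p 1) (p 3) (p 7)*bracket4 (p 0) (p 2) (p 3) (p 4)*bracket4 (p 0) (p 2) (p 3) (p 6)*bracket4 (p 0) (p 2) (p 3) (p 7)*bracket4 (p 1) (p 2) (p 3) (p 4)*bracket4 (p 1) (p 2) (p 3) (p 6)*bracket4 (p 1) (p 2) (p 3) (p 6)) * e3 + (-(bracket4 (p 0) (p 1) (p 2) (p 4)*bracket4 (p 0) (p 1) (p 2) (p 5)*bracket4 (p 0) (p 1) (p 2)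 (p 7)*bracket4 (p 0) (p 1) (p 2) (p 7)*bracket4 (p 0) (p 1) (p 3) (p 5)*bracket4 (p 0) (p 1) (p 3) (p 6)*bracket4 (p 0) (p 1) (p 3) (p 7)*bracket4 (p 0) (p 2) (p 3) (p 4)*bracket4 (p 0) (p 2) (p 3) (p 4)*bracket4 (p 0) (p 2) (p 3) (p 7)*bracket4 (p 1) (p 2) (p 3) (p 4)*bracket4 (p 1) (p 2) (p 3) (p 5)*bracket4 (p 1) (p 2) (p 3) (p 6)*bracket4 (p 1) (p 2) (p 3) (p 6))) * e4 + (bracket4 (p 0) (p 1) (p 2) (p 4)*bracket4 (p 0) (p 1) (p 2) (p 5)*bracket4 (p 0) (p 1) (p 2) (p 7)*bracket4 (p 0) (p 1) (p 2) (p 7)*bracket4 (p 0) (p 1) (p 3) (p 5)*bracket4 (p 0) (p 1) (p 3) (p 6)*bracket4 (p 0) (p 1) (p 3) (p 6)*bracket4 (p 0) (p 1) (p 3) (p 7)*bracket4 (p 0) (p 2) (p 3) (p 4)*bracket4 (p 0) (p 2) (p 3) (p 4)*bracket4 (p 0) (p 2) (p 3) (p 5)*bracket4 (p 1) (p 2)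 (p 3) (p 4)*bracket4 (p 1) (p 2) (p 3) (p 5)*bracket4 (p 1) (p 2) (p 3) (p 6)) * e5 + (bracket4 (p 0) (p 1) (p 2) (p 4)*bracket4 (p 0) (p 1) (p 2) (p 5)*bracket4 (p 0) (p 1) (p 2) (p 7)*bracket4 (p 0) (p 1) (p 2) (p 7)*bracket4 (p 0) (p 1) (p 3) (p 5)*bracket4 (p 0) (p 1) (p 3) (p 6)*bracket4 (p 0) (p 1) (p 3) (p 6)*bracket4 (p 0) (p 2) (p 3) (p 4)*bracket4 (p 0) (p 2) (p 3) (p 5)*bracket4 (p 0) (p 2) (p 3) (p 6)*bracket4 (p 1) (p 2) (p 3) (p 4)*bracket4 (p 1) (p 2) (p 3) (p 5)*bracket4 (p 1) (p 2) (p 3) (p 6)*bracket4 (p 1) (p 2) (p 3) (p 7)) * e6 + (bracket4 (p 0) (p 1) (p 2) (p 4)*bracket4 (p 0) (p 1) (p 2) (p 5)*bracket4 (p 0) (p 1) (p 2) (p 7)*bracket4 (p 0) (p 1) (p 3) (p 4)*bracket4 (p 0) (p 1) (p 3) (p 5)*bracket4 (p 0) (p 1) (p 3) (p 6)*bracket4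 (p 0) (p 2) (p 3) (p 4)*bracket4 (p 0) (p 2) (p 3) (p 5)*bracket4 (p 0) (p 2) (p 3) (p 6)*bracket4 (p 0) (p 2) (p 3) (p 7)*bracket4 (p 1) (p 2) (p 3) (p 4)*bracket4 (p 1) (p 2) (p 3) (p 5)*bracket4 (p 1) (p 2) (p 3) (p 6)*bracket4 (p 1) (p 2) (p 3) (p 7)) * e7
  have hM : (bracket4 (p 0) (p 1) (p 2) (p 5)*bracket4 (p 0) (p 1) (p 2) (p 6)*bracket4 (p 0) (p 1) (p 2) (p 7)*bracket4 (p 0) (p 1) (p 3) (p 4)*bracket4 (p 0) (p 1) (p 3) (p 5)*bracket4 (p 0) (p 1) (p 3) (p 6)*bracket4 (p 0) (p 1) (p 3) (p 7)*bracket4 (p 0) (p 2) (p 3) (p 4)*bracket4 (p 0) (p 2) (p 3) (p 5)*bracket4 (p 0) (p 2) (p 3) (p 6)*bracket4 (p 0) (p 2) (p 3) (p 7)*bracket4 (p 1) (p 2) (p 3) (p 4)*bracket4 (p 1) (p 2) (p 3) (p 5)*bracket4 (p 1) (p 2) (p 3) (p 6)) ≠ 0 := mul_ne_zero (mul_ne_zero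 (mul_ne_zero (mul_ne_zero (mul_ne_zero (mul_ne_zero (mul_ne_zero (mul_ne_zero (mul_ne_zero (mul_ne_zero (mul_ne_zero (mul_ne_zero (mul_ne_zero (n0) n1) n2) n3) n4) n5) n6) n7) n8) n9) n10) n11) n12) n13
  have hdiff : ((bracket4 (p 0) (p 1) (p 2) (p 4) * bracket4 (p 1) (p 2) (p 3) (p 7)) - (bracket4 (p 1) (p 2) (p 3) (p 4) * bracket4 (p 0) (p 1) (p 2) (p 7))) = 0 := by
    rcases mul_eq_zero.mp key2 with h|h
    · exact h
    · exact absurd h hM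
  have key : bracket4 (p 1) (p 2) (p 4) (p 7) * bracket4 (p 0) (p 1) (p 2) (p 3) = (bracket4 (p 0) (p 1) (p 2) (p 4) * bracket4 (p 1) (p 2) (p 3) (p 7)) - (bracket4 (p 1) (p 2) (p 3) (p 4) * bracket4 (p 0) (p 1) (p 2) (p 7)) := by
    simp only [bexp]; ring
  have : bracket4 (p 1) (p 2) (p 4) (p 7) * bracket4 (p 0) (p 1) (p 2) (p 3) = 0 := by rw [key, hdiff]
  rcases mul_eq_zero.mp this with h|h
  · exact h
  · exact absurd h hW
end

section
/- (3×3 torus / Toblerone theorem, bracket form.) Let p₁,…,p₉ be vectors in ℝ⁴ regarded as homogeneous coordinates of points of real projective 3-space, and let F denote the family of nine index quadruples {1,2,4,5}, {2,3,5,6}, {1,3,4,6}, {4,5,7,8}, {5,6,8,9}, {4,6,7,9}, {1,2,7,8}, {2,3,8,9}, {1,3,7,9} (the faces of the 3×3 quadrilateral grid on the torus). Assume that for every 4-element subset S of {1,…,9} that does NOT belong to F, the bracket of the corresponding four vectors is nonzero. If the brackets of the eight faces other than {4,6,7,9} all vanish, then also [p₄,p₆,p₇,p₉] = 0; i.e.,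 if eight of the nine quadrilateral faces are flat, the ninth is flat as well. -/
/-- The nine faces of the 3×3 quadrilateral grid on the torus:
`{1,2,4,5}, {2,3,5,6}, {1,3,4,6}, {4,5,7,8}, {5,6,8,9}, {4,6,7,9}, {1,2,7,8},
{2,3,8,9}, {1,3,7,9}` (written here with 0-based indices, point `i` is `p (i-1)`). -/
def tobleroneFaces : Finset (Finset (Fin 9)) :=
  { {0, 1, 3, 4}, {1, 2, 4, 5}, {0, 2, 3, 5},
    {3, 4, 6, 7}, {4, 5, 7, 8}, {3, 5, 6, 8},
    {0, 1, 6, 7}, {1, 2, 7, 8}, {0, 2, 6, 8} }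

private theorem det_fin_four' (A : Matrix (Fin 4) (Fin 4) ℝ) :
    A.det =
      A 0 0 * (A 1 1 * (A 2 2 * A 3 3 - A 2 3 * A 3 2) - A 1 2 * (A 2 1 * A 3 3 - A 2 3 * A 3 1) + A 1 3 * (A 2 1 * A 3 2 - A 2 2 * A 3 1))
    - A 0 1 * (A 1 0 * (A 2 2 * A 3 3 - A 2 3 * A 3 2) - A 1 2 * (A 2 0 * A 3 3 - A 2 3 * A 3 0) + A 1 3 * (A 2 0 * A 3 2 - A 2 2 * A 3 0))
    + A 0 2 * (A 1 0 * (A 2 1 * A 3 3 - A 2 3 * A 3 1) - A 1 1 * (A 2 0 * A 3 3 - A 2 3 * A 3 0) + A 1 3 * (A 2 0 * A 3 1 - A 2 1 * A 3 0))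
    - A 0 3 * (A 1 0 * (A 2 1 * A 3 2 - A 2 2 * A 3 1) - A 1 1 * (A 2 0 * A 3 2 - A 2 2 * A 3 0) + A 1 2 * (A 2 0 * A 3 1 - A 2 1 * A 3 0)) := by
  rw [Matrix.det_succ_row_zero]
  simp [Fin.sum_univ_succ, Matrix.det_fin_three, Matrix.submatrix_apply, Fin.succAbove,
    show (Fin.succ 2 : Fin 4) = 3 from rfl,
    show (Fin.castSucc (2:Fin 3) : Fin 4) = 2 from rfl]
  ring

private theorem bracket4_expand (a b c d : Fin 4 → ℝ) :
    bracket4 a b c d =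
      a 0 * (b 1 * (c 2 * d 3 - c 3 * d 2) - b 2 * (c 1 * d 3 - c 3 * d 1) + b 3 * (c 1 * d 2 - c 2 * d 1))
    - b 0 * (a 1 * (c 2 * d 3 - c 3 * d 2) - a 2 * (c 1 * d 3 - c 3 * d 1) + a 3 * (c 1 * d 2 - c 2 * d 1))
    + c 0 * (a 1 * (b 2 * d 3 - b 3 * d 2) - a 2 * (b 1 * d 3 - b 3 * d 1) + a 3 * (b 1 * d 2 - b 2 * d 1))
    - d 0 * (a 1 * (b 2 * c 3 - b 3 * c 2) - a 2 * (b 1 * c 3 - b 3 * c 1) + a 3 * (b 1 * c 2 - b 2 * c 1)) := by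
  rw [bracket4, det_fin_four']
  simp [Matrix.transpose_apply]
  ring

private theorem gp4 (a b c d x y : Fin 4 → ℝ) :
    bracket4 a b c x * bracket4 a b d y - bracket4 a b c y * bracket4 a b d x
      = bracket4 a b c d * bracket4 a b x y := by
  simp only [bracket4_expand]; ring


private theorem bperm_abdc (a b c d : Fin 4 → ℝ) :
    bracket4 a b d c = -bracket4 a b c d := by
  simp only [bracket4_expand]; ring


private theorem bperm_acbd (a b c d : Fin 4 → ℝ) :
    bracket4 a c b d = -bracket4 a b c d := by
  simp only [bracket4_expand]; ring


private theorem bperm_acdb (a b c d : Fin 4 → ℝ) :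
    bracket4 a c d b = bracket4 a b c d := by
  simp only [bracket4_expand]; ring


private theorem bperm_adbc (a b c d : Fin 4 → ℝ) :
    bracket4 a d b c = bracket4 a b c d := by
  simp only [bracket4_expand]; ring


private theorem bperm_adcb (a b c d : Fin 4 → ℝ) :
    bracket4 a d c b = -bracket4 a b c d := by
  simp only [bracket4_expand]; ring


private theorem bperm_bcda (a b c d : Fin 4 → ℝ) :
    bracket4 b c d a = -bracket4 a b c d := by
  simp only [bracket4_expand]; ring


private theorem bperm_bdac (a b c d : Fin 4 → ℝ) :
    bracket4 b d a c = -bracket4 a b c d := by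
  simp only [bracket4_expand]; ring


private theorem bperm_bdca (a b c d : Fin 4 → ℝ) :
    bracket4 b d c a = bracket4 a b c d := by
  simp only [bracket4_expand]; ring


/-- **3×3 torus (Toblerone) theorem** (bracket form).  If all brackets of quadruples
that are not faces of the grid are nonzero, and eight of the nine faces are flat,
then the ninth face `{4,6,7,9}` is flat as well. -/
theorem toblerone_torus_theorem (p : Fin 9 → (Fin 4 → ℝ))
    (hnd : ∀ i j k l : Fin 9, ({i, j, k, l} : Finset (Fin 9)).card = 4 →
      ({i, j, k, l} : Finset (Fin 9)) ∉ tobleroneFaces →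
      bracket4 (p i) (p j) (p k) (p l) ≠ 0)
    (h1 : bracket4 (p 0) (p 1) (p 3) (p 4) = 0)
    (h2 : bracket4 (p 1) (p 2) (p 4) (p 5) = 0)
    (h3 : bracket4 (p 0) (p 2) (p 3) (p 5) = 0)
    (h4 : bracket4 (p 3) (p 4) (p 6) (p 7) = 0)
    (h5 : bracket4 (p 4) (p 5) (p 7) (p 8) = 0)
    (h6 : bracket4 (p 0) (p 1) (p 6) (p 7) = 0)
    (h7 : bracket4 (p 1) (p 2) (p 7) (p 8) = 0)
    (h8 : bracket4 (p 0) (p 2) (p 6) (p 8) = 0) :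
    bracket4 (p 3) (p 5) (p 6) (p 8) = 0 := by

  have cb0132 := bperm_abdc (p 0) (p 1) (p 2) (p 3)
  have cb0142 := bperm_abdc (p 0) (p 1) (p 2) (p 4)
  have cb0162 := bperm_abdc (p 0) (p 1) (p 2) (p 6)
  have cb0172 := bperm_abdc (p 0) (p 1) (p 2) (p 7)
  have cb0321 := bperm_adcb (p 0) (p 1) (p 2) (p 3)
  have cb0325 := bperm_acbd (p 0) (p 2) (p 3) (p 5)
  have cb0326 := bperm_acbd (p 0) (p 2) (p 3) (p 6)
  have cb0351 := bperm_acdb (p 0) (p 1) (p 3) (p 5)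
  have cb0621 := bperm_adcb (p 0) (p 1) (p 2) (p 6)
  have cb0623 := bperm_adbc (p 0) (p 2) (p 3) (p 6)
  have cb0628 := bperm_acbd (p 0) (p 2) (p 6) (p 8)
  have cb0681 := bperm_acdb (p 0) (p 1) (p 6) (p 8)
  have cb0683 := bperm_acdb (p 0) (p 3) (p 6) (p 8)
  have cb1420 := bperm_bdca (p 0) (p 1) (p 2) (p 4)
  have cb1425 := bperm_acbd (p 1) (p 2) (p 4) (p 5)
  have cb1427 := bperm_acbd (p 1) (p 2) (p 4) (p 7)
  have cb1450 := bperm_bcda (p 0) (p 1) (p 4) (p 5)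
  have cb1720 := bperm_bdca (p 0) (p 1) (p 2) (p 7)
  have cb1724 := bperm_adbc (p 1) (p 2) (p 4) (p 7)
  have cb1728 := bperm_acbd (p 1) (p 2) (p 7) (p 8)
  have cb1780 := bperm_bcda (p 0) (p 1) (p 7) (p 8)
  have cb1784 := bperm_acdb (p 1) (p 4) (p 7) (p 8)
  have cb3465 := bperm_abdc (p 3) (p 4) (p 5) (p 6)
  have cb3475 := bperm_abdc (p 3) (p 4) (p 5) (p 7)
  have cb3604 := bperm_bdac (p 0) (p 3) (p 4) (p 6)
  have cb3650 := bperm_bdca (p 0) (p 3) (p 5) (p 6)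
  have cb3654 := bperm_adcb (p 3) (p 4) (p 5) (p 6)
  have cb3658 := bperm_acbd (p 3) (p 5) (p 6) (p 8)
  have cb3680 := bperm_bcda (p 0) (p 3) (p 6) (p 8)
  have cb3684 := bperm_acdb (p 3) (p 4) (p 6) (p 8)
  have cb4751 := bperm_bdca (p 1) (p 4) (p 5) (p 7)
  have cb4753 := bperm_bdca (p 3) (p 4) (p 5) (p 7)
  have cb4758 := bperm_acbd (p 4) (p 5) (p 7) (p 8)
  have cb4781 := bperm_bcda (p 1) (p 4) (p 7) (p 8)
  have cb4783 := bperm_bcda (p 3) (p 4) (p 7) (p 8)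
  have g1 := gp4 (p 0) (p 1) (p 3) (p 4) (p 2) (p 5)
  rw [cb0132, cb0142, h1] at g1
  have g2 := gp4 (p 1) (p 4) (p 2) (p 5) (p 0) (p 7)
  rw [cb1425, cb1420, cb1427, cb1450, h2] at g2
  have g3 := gp4 (p 0) (p 3) (p 2) (p 5) (p 6) (p 1)
  rw [cb0325, cb0326, cb0351, cb0321, h3] at g3
  have g4 := gp4 (p 3) (p 4) (p 6) (p 7) (p 5) (p 8)
  rw [cb3465, cb3475, h4] at g4
  have g5 := gp4 (p 4) (p 7) (p 5) (p 8) (p 3) (p 1)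
  rw [cb4758, cb4753, cb4781, cb4751, cb4783, h5] at g5
  have g6 := gp4 (p 0) (p 1) (p 6) (p 7) (p 8) (p 2)
  rw [cb0172, cb0162, h6] at g6
  have g7 := gp4 (p 1) (p 7) (p 2) (p 8) (p 4) (p 0)
  rw [cb1728, cb1724, cb1780, cb1720, cb1784, h7] at g7
  have g8 := gp4 (p 0) (p 6) (p 2) (p 8) (p 1) (p 3)
  rw [cb0628, cb0621, cb0683, cb0623, cb0681, h8] at g8
  have g9 := gp4 (p 3) (p 6) (p 5) (p 8) (p 0) (p 4)
  rw [cb3658, cb3650, cb3684, cb3654, cb3680, cb3604] at g9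
  have n0123 : bracket4 (p 0) (p 1) (p 2) (p 3) ≠ 0 := hnd 0 1 2 3 (by decide) (by decide)
  have n0124 : bracket4 (p 0) (p 1) (p 2) (p 4) ≠ 0 := hnd 0 1 2 4 (by decide) (by decide)
  have n0126 : bracket4 (p 0) (p 1) (p 2) (p 6) ≠ 0 := hnd 0 1 2 6 (by decide) (by decide)
  have n0127 : bracket4 (p 0) (p 1) (p 2) (p 7) ≠ 0 := hnd 0 1 2 7 (by decide) (by decide)
  have n0135 : bracket4 (p 0) (p 1) (p 3) (p 5) ≠ 0 := hnd 0 1 3 5 (by decide) (by decide)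
  have n0145 : bracket4 (p 0) (p 1) (p 4) (p 5) ≠ 0 := hnd 0 1 4 5 (by decide) (by decide)
  have n0168 : bracket4 (p 0) (p 1) (p 6) (p 8) ≠ 0 := hnd 0 1 6 8 (by decide) (by decide)
  have n0178 : bracket4 (p 0) (p 1) (p 7) (p 8) ≠ 0 := hnd 0 1 7 8 (by decide) (by decide)
  have n0236 : bracket4 (p 0) (p 2) (p 3) (p 6) ≠ 0 := hnd 0 2 3 6 (by decide) (by decide)
  have n0346 : bracket4 (p 0) (p 3) (p 4) (p 6) ≠ 0 := hnd 0 3 4 6 (by decide) (by decide)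
  have n0368 : bracket4 (p 0) (p 3) (p 6) (p 8) ≠ 0 := hnd 0 3 6 8 (by decide) (by decide)
  have n1247 : bracket4 (p 1) (p 2) (p 4) (p 7) ≠ 0 := hnd 1 2 4 7 (by decide) (by decide)
  have n1457 : bracket4 (p 1) (p 4) (p 5) (p 7) ≠ 0 := hnd 1 4 5 7 (by decide) (by decide)
  have n1478 : bracket4 (p 1) (p 4) (p 7) (p 8) ≠ 0 := hnd 1 4 7 8 (by decide) (by decide)
  have n3456 : bracket4 (p 3) (p 4) (p 5) (p 6) ≠ 0 := hnd 3 4 5 6 (by decide) (by decide)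
  have n3457 : bracket4 (p 3) (p 4) (p 5) (p 7) ≠ 0 := hnd 3 4 5 7 (by decide) (by decide)
  have n3478 : bracket4 (p 3) (p 4) (p 7) (p 8) ≠ 0 := hnd 3 4 7 8 (by decide) (by decide)
  have hP : ((bracket4 (p 0) (p 1) (p 2) (p 3)) * (bracket4 (p 0) (p 1) (p 4) (p 5)) * (bracket4 (p 0) (p 1) (p 2) (p 4)) * (bracket4 (p 1) (p 4) (p 5) (p 7)) * (bracket4 (p 0) (p 2) (p 3) (p 6)) * (bracket4 (p 0) (p 1) (p 3) (p 5)) * (bracket4 (p 3) (p 4) (p 5) (p 6)) * (bracket4 (p 3) (p 4) (p 7) (p 8)) * (bracket4 (p 3) (p 4) (p 5) (p 7)) * (bracket4 (p 1) (p 4) (p 7) (p 8)) * (bracket4 (p 0) (p 1) (p 6) (p 8)) * (bracket4 (p 0) (p 1) (p 2) (p 7)) * (bracket4 (p 1) (p 2) (p 4) (p 7)) * (bracket4 (p 0) (p 1) (p 7) (p 8)) * (bracket4 (p 0) (p 1) (p 2) (p 6)) * (bracket4 (p 0) (p 3) (p 6) (p 8))) ≠ 0 := (mul_ne_zero (mul_ne_zero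 (mul_ne_zero (mul_ne_zero (mul_ne_zero (mul_ne_zero (mul_ne_zero (mul_ne_zero (mul_ne_zero (mul_ne_zero (mul_ne_zero (mul_ne_zero (mul_ne_zero (mul_ne_zero (mul_ne_zero n0123 n0145) n0124) n1457) n0236) n0135) n3456) n3478) n3457) n1478) n0168) n0127) n1247) n0178) n0126) n0368)
  have hOP : (bracket4 (p 0) (p 3) (p 4) (p 6)) * ((bracket4 (p 0) (p 1) (p 2) (p 3)) * (bracket4 (p 0) (p 1) (p 4) (p 5)) * (bracket4 (p 0) (p 1) (p 2) (p 4)) * (bracket4 (p 1) (p 4) (p 5) (p 7)) * (bracket4 (p 0) (p 2) (p 3) (p 6)) * (bracket4 (p 0) (p 1) (p 3) (p 5)) * (bracket4 (p 3) (p 4) (p 5) (p 6)) * (bracket4 (p 3) (p 4) (p 7) (p 8)) * (bracket4 (p 3) (p 4) (p 5) (p 7)) * (bracket4 (p 1) (p 4) (p 7) (p 8)) * (bracket4 (p 0) (p 1) (p 6) (p 8)) * (bracket4 (p 0) (p 1) (p 2) (p 7)) * (bracket4 (p 1) (p 2) (p 4) (p 7)) * (bracket4 (p 0) (p 1) (p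 7) (p 8)) * (bracket4 (p 0) (p 1) (p 2) (p 6)) * (bracket4 (p 0) (p 3) (p 6) (p 8))) ≠ 0 := mul_ne_zero n0346 hP
  have hfinal : bracket4 (p 3) (p 5) (p 6) (p 8) * ((bracket4 (p 0) (p 3) (p 4) (p 6)) * ((bracket4 (p 0) (p 1) (p 2) (p 3)) * (bracket4 (p 0) (p 1) (p 4) (p 5)) * (bracket4 (p 0) (p 1) (p 2) (p 4)) * (bracket4 (p 1) (p 4) (p 5) (p 7)) * (bracket4 (p 0) (p 2) (p 3) (p 6)) * (bracket4 (p 0) (p 1) (p 3) (p 5)) * (bracket4 (p 3) (p 4) (p 5) (p 6)) * (bracket4 (p 3) (p 4) (p 7) (p 8)) * (bracket4 (p 3) (p 4) (p 5) (p 7)) * (bracket4 (p 1) (p 4) (p 7) (p 8)) * (bracket4 (p 0) (p 1) (p 6) (p 8)) * (bracket4 (p 0) (p 1) (p 2) (p 7)) * (bracket4 (p 1) (p 2) (p 4) (p 7)) * (bracket4 (p 0) (p 1) (p 7) (p 8)) * (bracket4 (p 0) (p 1) (p 2) (p 6)) * (bracket4 (p 0) (p 3) (p 6) (p 8)))) =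 0 := by
    linear_combination (-((bracket4 (p 0) (p 1) (p 2) (p 3)) * (bracket4 (p 0) (p 1) (p 4) (p 5)) * (bracket4 (p 0) (p 1) (p 2) (p 4)) * (bracket4 (p 1) (p 4) (p 5) (p 7)) * (bracket4 (p 0) (p 2) (p 3) (p 6)) * (bracket4 (p 0) (p 1) (p 3) (p 5)) * (bracket4 (p 3) (p 4) (p 5) (p 6)) * (bracket4 (p 3) (p 4) (p 7) (p 8)) * (bracket4 (p 3) (p 4) (p 5) (p 7)) * (bracket4 (p 1) (p 4) (p 7) (p 8)) * (bracket4 (p 0) (p 1) (p 6) (p 8)) * (bracket4 (p 0) (p 1) (p 2) (p 7)) * (bracket4 (p 1) (p 2) (p 4) (p 7)) * (bracket4 (p 0) (p 1) (p 7) (p 8)) * (bracket4 (p 0) (p 1) (p 2) (p 6)) * (bracket4 (p 0) (p 3) (p 6) (p 8)))) * g9 + (((bracket4 (p 3) (p 4) (p 5) (p 6)) * (bracket4 (p 0) (p 3) (p 6) (p 8)) * (bracket4 (p 1) (p 2) (p 4) (p 7)) * (bracket4 (p 0) (p 1) (p 4) (p 5)) * (bracket4 (p 0) (p 1) (p 2)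 (p 3)) * (bracket4 (p 0) (p 3) (p 5) (p 6)) * (bracket4 (p 3) (p 4) (p 6) (p 8)) * (bracket4 (p 3) (p 4) (p 5) (p 7)) * (bracket4 (p 1) (p 4) (p 5) (p 7)) * (bracket4 (p 3) (p 4) (p 7) (p 8)) * (bracket4 (p 0) (p 1) (p 2) (p 6)) * (bracket4 (p 0) (p 1) (p 7) (p 8)) * (bracket4 (p 0) (p 1) (p 2) (p 7)) * (bracket4 (p 1) (p 4) (p 7) (p 8)) * (bracket4 (p 0) (p 2) (p 3) (p 6)) * (bracket4 (p 0) (p 1) (p 6) (p 8)))) * g1 + (-((bracket4 (p 3) (p 4) (p 5) (p 6)) * (bracket4 (p 0) (p 3) (p 6) (p 8)) * (bracket4 (p 0) (p 1) (p 2) (p 3)) * (bracket4 (p 0) (p 1) (p 4) (p 5)) * (bracket4 (p 0) (p 1) (p 2) (p 3)) * (bracket4 (p 0) (p 3) (p 5) (p 6)) * (bracket4 (p 3) (p 4) (p 6) (p 8)) * (bracket4 (p 3) (p 4) (p 5) (p 7)) * (bracket4 (p 1) (p 4) (p 5) (p 7)) * (bracket4 (p 3) (p 4) (p 7) (p 8))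 * (bracket4 (p 0) (p 1) (p 2) (p 6)) * (bracket4 (p 0) (p 1) (p 7) (p 8)) * (bracket4 (p 0) (p 1) (p 2) (p 7)) * (bracket4 (p 1) (p 4) (p 7) (p 8)) * (bracket4 (p 0) (p 2) (p 3) (p 6)) * (bracket4 (p 0) (p 1) (p 6) (p 8)))) * g2 + (((bracket4 (p 3) (p 4) (p 5) (p 6)) * (bracket4 (p 0) (p 3) (p 6) (p 8)) * (bracket4 (p 0) (p 1) (p 2) (p 3)) * (bracket4 (p 0) (p 1) (p 4) (p 5)) * (bracket4 (p 0) (p 1) (p 2) (p 4)) * (bracket4 (p 1) (p 4) (p 5) (p 7)) * (bracket4 (p 3) (p 4) (p 6) (p 8)) * (bracket4 (p 3) (p 4) (p 5) (p 7)) * (bracket4 (p 1) (p 4) (p 5) (p 7)) * (bracket4 (p 3) (p 4) (p 7) (p 8)) * (bracket4 (p 0) (p 1) (p 2) (p 6)) * (bracket4 (p 0) (p 1) (p 7) (p 8)) * (bracket4 (p 0) (p 1) (p 2) (p 7)) * (bracket4 (p 1) (p 4) (p 7) (p 8)) * (bracket4 (p 0) (p 2) (p 3) (p 6)) * (bracket4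 (p 0) (p 1) (p 6) (p 8)))) * g3 + (((bracket4 (p 3) (p 4) (p 5) (p 6)) * (bracket4 (p 0) (p 3) (p 6) (p 8)) * (bracket4 (p 0) (p 1) (p 2) (p 3)) * (bracket4 (p 0) (p 1) (p 4) (p 5)) * (bracket4 (p 0) (p 1) (p 2) (p 4)) * (bracket4 (p 1) (p 4) (p 5) (p 7)) * (bracket4 (p 0) (p 2) (p 3) (p 6)) * (bracket4 (p 0) (p 1) (p 3) (p 5)) * (bracket4 (p 1) (p 4) (p 5) (p 7)) * (bracket4 (p 3) (p 4) (p 7) (p 8)) * (bracket4 (p 0) (p 1) (p 2) (p 6)) * (bracket4 (p 0) (p 1) (p 7) (p 8)) * (bracket4 (p 0) (p 1) (p 2) (p 7)) * (bracket4 (p 1) (p 4) (p 7) (p 8)) * (bracket4 (p 0) (p 2) (p 3) (p 6)) * (bracket4 (p 0) (p 1) (p 6) (p 8)))) * g4 + (((bracket4 (p 3) (p 4) (p 5) (p 6)) * (bracket4 (p 0) (p 3) (p 6) (p 8)) * (bracket4 (p 0) (p 1) (p 2) (p 3)) * (bracket4 (p 0) (p 1) (p 4) (p 5)) * (bracket4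 (p 0) (p 1) (p 2) (p 4)) * (bracket4 (p 1) (p 4) (p 5) (p 7)) * (bracket4 (p 0) (p 2) (p 3) (p 6)) * (bracket4 (p 0) (p 1) (p 3) (p 5)) * (bracket4 (p 3) (p 4) (p 5) (p 6)) * (bracket4 (p 3) (p 4) (p 7) (p 8)) * (bracket4 (p 0) (p 1) (p 2) (p 6)) * (bracket4 (p 0) (p 1) (p 7) (p 8)) * (bracket4 (p 0) (p 1) (p 2) (p 7)) * (bracket4 (p 1) (p 4) (p 7) (p 8)) * (bracket4 (p 0) (p 2) (p 3) (p 6)) * (bracket4 (p 0) (p 1) (p 6) (p 8)))) * g5 + (((bracket4 (p 3) (p 4) (p 5) (p 6)) * (bracket4 (p 0) (p 3) (p 6) (p 8)) * (bracket4 (p 0) (p 1) (p 2) (p 3)) * (bracket4 (p 0) (p 1) (p 4) (p 5)) * (bracket4 (p 0) (p 1) (p 2) (p 4)) * (bracket4 (p 1) (p 4) (p 5) (p 7)) * (bracket4 (p 0) (p 2) (p 3) (p 6)) * (bracket4 (p 0) (p 1) (p 3) (p 5)) * (bracket4 (p 3) (p 4) (p 5) (p 6)) * (bracket4 (p 3)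 (p 4) (p 7) (p 8)) * (bracket4 (p 3) (p 4) (p 5) (p 7)) * (bracket4 (p 1) (p 4) (p 7) (p 8)) * (bracket4 (p 0) (p 1) (p 2) (p 7)) * (bracket4 (p 1) (p 4) (p 7) (p 8)) * (bracket4 (p 0) (p 2) (p 3) (p 6)) * (bracket4 (p 0) (p 1) (p 6) (p 8)))) * g6 + (-((bracket4 (p 3) (p 4) (p 5) (p 6)) * (bracket4 (p 0) (p 3) (p 6) (p 8)) * (bracket4 (p 0) (p 1) (p 2) (p 3)) * (bracket4 (p 0) (p 1) (p 4) (p 5)) * (bracket4 (p 0) (p 1) (p 2) (p 4)) * (bracket4 (p 1) (p 4) (p 5) (p 7)) * (bracket4 (p 0) (p 2) (p 3) (p 6)) * (bracket4 (p 0) (p 1) (p 3) (p 5)) * (bracket4 (p 3) (p 4) (p 5) (p 6)) * (bracket4 (p 3) (p 4) (p 7) (p 8)) * (bracket4 (p 3) (p 4) (p 5) (p 7)) * (bracket4 (p 1) (p 4) (p 7) (p 8)) * (bracket4 (p 0) (p 1) (p 6) (p 8)) * (bracket4 (p 0) (p 1) (p 2) (p 7)) * (bracket4 (p 0) (p 2)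 (p 3) (p 6)) * (bracket4 (p 0) (p 1) (p 6) (p 8)))) * g7 + (((bracket4 (p 3) (p 4) (p 5) (p 6)) * (bracket4 (p 0) (p 3) (p 6) (p 8)) * (bracket4 (p 0) (p 1) (p 2) (p 3)) * (bracket4 (p 0) (p 1) (p 4) (p 5)) * (bracket4 (p 0) (p 1) (p 2) (p 4)) * (bracket4 (p 1) (p 4) (p 5) (p 7)) * (bracket4 (p 0) (p 2) (p 3) (p 6)) * (bracket4 (p 0) (p 1) (p 3) (p 5)) * (bracket4 (p 3) (p 4) (p 5) (p 6)) * (bracket4 (p 3) (p 4) (p 7) (p 8)) * (bracket4 (p 3) (p 4) (p 5) (p 7)) * (bracket4 (p 1) (p 4) (p 7) (p 8)) * (bracket4 (p 0) (p 1) (p 6) (p 8)) * (bracket4 (p 0) (p 1) (p 2) (p 7)) * (bracket4 (p 1) (p 2) (p 4) (p 7)) * (bracket4 (p 0) (p 1) (p 7) (p 8)))) * g8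
  exact (mul_eq_zero.mp hfinal).resolve_right hOP
end

section
/- Let p₁,…,p₈ be vectors in ℝ⁴. If there exists a nonzero vector x lying simultaneously in the span of {p₇, p₈}, in the span of {p₁, p₂, p₃}, and in the span of {p₄, p₅, p₆} (i.e., the line spanned by p₇, p₈ hits the intersection of the two planes spanned by p₁,p₂,p₃ and by p₄,p₅,p₆), then [p₁,p₂,p₃,p₇]·[p₄,p₅,p₆,p₈] = [p₁,p₂,p₃,p₈]·[p₄,p₅,p₆,p₇]. -/
lemma bracket4_eq_det (a b c d : Fin 4 → ℝ) :
    bracket4 a b c d = (Matrix.of ![a, b, c, d]).det := by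
  rw [bracket4, Matrix.det_transpose]

lemma updateRow_three (a b c u x : Fin 4 → ℝ) :
    Matrix.updateRow (Matrix.of ![a, b, c, u]) 3 x = Matrix.of ![a, b, c, x] := by
  ext i j
  fin_cases i <;> simp [Matrix.updateRow_apply]

lemma bracket4_last_linear (a b c u v : Fin 4 → ℝ) (r s : ℝ) :
    bracket4 a b c (r • u + s • v) = r * bracket4 a b c u + s * bracket4 a b c v := by
  simp only [bracket4_eq_det]
  rw [← updateRow_three a b c u (r • u + s • v), Matrix.det_updateRow_add,
    Matrix.det_updateRow_smul, Matrix.det_updateRow_smul, updateRow_three, updateRow_three]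

lemma bracket4_mem_span (a b c x : Fin 4 → ℝ)
    (hx : x ∈ Submodule.span ℝ ({a, b, c} : Set (Fin 4 → ℝ))) :
    bracket4 a b c x = 0 := by
  rw [Submodule.mem_span_insert] at hx
  obtain ⟨r, z, hz, rfl⟩ := hx
  rw [Submodule.mem_span_pair] at hz
  obtain ⟨s, t, rfl⟩ := hz
  rw [bracket4_eq_det]
  have hdep : ¬ LinearIndependent ℝ ![a, b, c, r • a + (s • b + t • c)] := by
    rw [Fintype.not_linearIndependent_iff]
    refine ⟨![r, s, t, -1], ?_, 3, by show (-1 : ℝ) ≠ 0; norm_num⟩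
    simp [Fin.sum_univ_four]
    module
  exact (Matrix.detRowAlternating : (Fin 4 → ℝ) [⋀^Fin 4]→ₗ[ℝ] ℝ).map_linearDependent _ hdep

/-- If the projective line spanned by `p₇, p₈` meets the intersection of the two
planes spanned by `p₁, p₂, p₃` and by `p₄, p₅, p₆`, then
`[p₁,p₂,p₃,p₇]·[p₄,p₅,p₆,p₈] = [p₁,p₂,p₃,p₈]·[p₄,p₅,p₆,p₇]`. -/
theorem line_meets_plane_intersection_binomial
    (p₁ p₂ p₃ p₄ p₅ p₆ p₇ p₈ : Fin 4 → ℝ)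
    (h : ∃ x : Fin 4 → ℝ, x ≠ 0 ∧
      x ∈ Submodule.span ℝ ({p₇, p₈} : Set (Fin 4 → ℝ)) ∧
      x ∈ Submodule.span ℝ ({p₁, p₂, p₃} : Set (Fin 4 → ℝ)) ∧
      x ∈ Submodule.span ℝ ({p₄, p₅, p₆} : Set (Fin 4 → ℝ))) :
    bracket4 p₁ p₂ p₃ p₇ * bracket4 p₄ p₅ p₆ p₈
      = bracket4 p₁ p₂ p₃ p₈ * bracket4 p₄ p₅ p₆ p₇ := by
  obtain ⟨x, hx0, hx78, hP, hQ⟩ := h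
  rw [Submodule.mem_span_pair] at hx78
  obtain ⟨s, t, rfl⟩ := hx78
  have hB := bracket4_mem_span p₁ p₂ p₃ _ hP
  have hC := bracket4_mem_span p₄ p₅ p₆ _ hQ
  rw [bracket4_last_linear] at hB hC
  rcases eq_or_ne s 0 with hs | hs
  · have ht : t ≠ 0 := by
      rintro rfl
      simp [hs] at hx0
    subst hs
    rw [zero_mul, zero_add] at hB hC
    have hB8 := (mul_eq_zero.mp hB).resolve_left ht
    have hC8 := (mul_eq_zero.mp hC).resolve_left ht
    rw [hB8, hC8]; ring
  · have key : s * (bracket4 p₁ p₂ p₃ p₇ * bracket4 p₄ p₅ p₆ p₈)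
        = s * (bracket4 p₁ p₂ p₃ p₈ * bracket4 p₄ p₅ p₆ p₇) := by
      linear_combination bracket4 p₄ p₅ p₆ p₈ * hB - bracket4 p₁ p₂ p₃ p₈ * hC
    exact mul_left_cancel₀ hs key
end
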